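/- Let k be a field, λ ∈ k with λ ≠ 0, and n ≥ 1. Let S = Fin n × Bool and let A = S → k be the k-algebra of k-valued functions on S with pointwise multiplication; write m : A ⊗ₖ A → A for the multiplication as a linear map, u : k → A for the unit map (u(1) = 1, the constant function 1), and for s ∈ S let δ_s ∈ A be the indicator function of s. Define k-linear maps: Δ : A → A ⊗ₖ A determined by Δ(δ_s) = λ · (δ_s ⊗ δ_s) for all s ∈ S; ε : A → k by ε(f) = λ⁻¹ · Σ_{s ∈ S} f(s); φ : A → A by (φ f)(i, v) = f(i, ¬v); and θ : k → A the zero map. Then: (a) (ε ⊗ id) ∘ Δ = id_A = (id ⊗ ε) ∘ Δ and (Δ ⊗ id) ∘ Δ = (id ⊗ Δ) ∘ Δ (coalgebra laws); (b) Δ ∘ m = (m ⊗ id) ∘ (id ⊗ Δ) (the Frobenius compatibility); (c) φ ∘ φ = id_A, φ ∘ u = u, ε ∘ φ = ε, φ(fg) = φ(f)·φ(g) for all f, g ∈ A, and Δ ∘ φ = (φ ⊗ φ) ∘ Δ (φ is a Frobenius algebra involution); (d) m ∘ (φ ⊗ id) ∘ Δ ∘ u = 0; and (e) m ∘ Δ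 = λ · id_A. -/
import Mathlib


open TensorProduct

/-- The algebra of `k`-valued functions on the `2n`-point set `Fin n × Bool`. -/
abbrev FunAlg (k : Type*) [Field k] (n : ℕ) : Type _ := (Fin n × Bool) → k

section Aux

variable {k : Type*} [Field k] {n : ℕ}

/-- Indicator function of `s`. -/
def deltaFn (k : Type*) [Field k] (n : ℕ) (s : Fin n × Bool) : FunAlg k n :=
  fun t => if t = s then 1 else 0

lemma deltaFn_basis (s : Fin n × Bool) :
    (Pi.basisFun k (Fin n × Bool)) s = deltaFn k n s := by
  funext t
  simp [Pi.basisFun_apply, Pi.single_apply, deltaFn]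

lemma deltaFn_mul (s t : Fin n × Bool) :
    deltaFn k n s * deltaFn k n t = if s = t then deltaFn k n s else 0 := by
  funext u
  simp only [Pi.mul_apply, deltaFn]
  by_cases h2 : s = t
  · subst h2
    by_cases h1 : u = s <;> simp [h1, deltaFn]
  · rw [if_neg h2]
    by_cases h1 : u = s
    · subst h1
      rw [if_neg h2, mul_zero]
      rfl
    · rw [if_neg h1, zero_mul]
      rfl

lemma deltaFn_mul_self (s : Fin n × Bool) :
    deltaFn k n s * deltaFn k n s = deltaFn k n s := by
  simp [deltaFn_mul]

lemma sum_deltaFn : (∑ s : Fin n × Bool, deltaFn k n s) = 1 := by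
  funext t
  simp [deltaFn, Finset.sum_apply, Finset.sum_ite_eq]

lemma sum_deltaFn_apply (s : Fin n × Bool) :
    (∑ t : Fin n × Bool, deltaFn k n s t) = 1 := by
  simp [deltaFn, Finset.sum_ite_eq']

end Aux

/-- The algebra of functions on `{x₁, x₋₁, …, xₙ, x₋ₙ}`, with comultiplication
`Δ(δ_s) = λ·δ_s ⊗ δ_s`, counit `ε(f) = λ⁻¹ Σ_s f(s)`, the index-flipping
involution `φ`, and crosscap `θ = 0`, is a commutative extended Frobenius
algebra with trivial crosscap; moreover its handle endomorphism is
`m ∘ Δ = λ·id`. -/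
theorem stmt_13 {k : Type*} [Field k] (l : k) (hl : l ≠ 0) (n : ℕ) (hn : 1 ≤ n)
    (Δ : FunAlg k n →ₗ[k] FunAlg k n ⊗[k] FunAlg k n)
    (hΔ : ∀ s : Fin n × Bool,
      Δ (fun t => if t = s then (1 : k) else 0) =
        l • ((fun t => if t = s then (1 : k) else 0) ⊗ₜ[k]
              (fun t => if t = s then (1 : k) else 0) : FunAlg k n ⊗[k] FunAlg k n))
    (ε : FunAlg k n →ₗ[k] k)
    (hε : ∀ f : FunAlg k n, ε f = l⁻¹ * ∑ s : Fin n × Bool, f s)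
    (φ : FunAlg k n →ₗ[k] FunAlg k n)
    (hφ : ∀ (f : FunAlg k n) (i : Fin n) (v : Bool), φ f (i, v) = f (i, !v)) :
    -- (a) coalgebra laws
    ((TensorProduct.lid k (FunAlg k n)).toLinearMap ∘ₗ
        TensorProduct.map ε LinearMap.id ∘ₗ Δ = LinearMap.id ∧
      (TensorProduct.rid k (FunAlg k n)).toLinearMap ∘ₗ
        TensorProduct.map LinearMap.id ε ∘ₗ Δ = LinearMap.id ∧
      (TensorProduct.assoc k (FunAlg k n) (FunAlg k n) (FunAlg k n)).toLinearMap ∘ₗ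
        TensorProduct.map Δ LinearMap.id ∘ₗ Δ = TensorProduct.map LinearMap.id Δ ∘ₗ Δ)
    ∧
    -- (b) Frobenius compatibility
    (Δ ∘ₗ LinearMap.mul' k (FunAlg k n) =
      TensorProduct.map (LinearMap.mul' k (FunAlg k n)) LinearMap.id ∘ₗ
        (TensorProduct.assoc k (FunAlg k n) (FunAlg k n) (FunAlg k n)).symm.toLinearMap ∘ₗ
        TensorProduct.map LinearMap.id Δ)
    ∧
    -- (c) φ is a Frobenius algebra involution
    (φ ∘ₗ φ = LinearMap.id ∧
      φ ∘ₗ Algebra.linearMap k (FunAlg k n) = Algebra.linearMap k (FunAlg k n) ∧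
      ε ∘ₗ φ = ε ∧
      (∀ f g : FunAlg k n, φ (f * g) = φ f * φ g) ∧
      Δ ∘ₗ φ = TensorProduct.map φ φ ∘ₗ Δ)
    ∧
    -- (d) the extended Frobenius condition with θ = 0
    (LinearMap.mul' k (FunAlg k n) ∘ₗ TensorProduct.map φ LinearMap.id ∘ₗ Δ ∘ₗ
      Algebra.linearMap k (FunAlg k n) = 0)
    ∧
    -- (e) the handle endomorphism
    (LinearMap.mul' k (FunAlg k n) ∘ₗ Δ = l • LinearMap.id) := by
  have hΔ' : ∀ s : Fin n × Bool,
      Δ (deltaFn k n s) = l • (deltaFn k n s ⊗ₜ[k] deltaFn k n s) := hΔ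
  have hεδ : ∀ s : Fin n × Bool, ε (deltaFn k n s) = l⁻¹ := by
    intro s
    rw [hε, sum_deltaFn_apply, mul_one]
  have hφδ : ∀ (i : Fin n) (v : Bool),
      φ (deltaFn k n (i, v)) = deltaFn k n (i, !v) := by
    intro i v
    funext u
    obtain ⟨j, w⟩ := u
    rw [hφ]
    show (if (j, !w) = (i, v) then (1:k) else 0) = if (j, w) = (i, !v) then 1 else 0
    congr 1
    simp only [Prod.ext_iff, eq_iff_iff, and_congr_right_iff]
    intro _
    cases w <;> cases v <;> simp
  refine ⟨⟨?_, ?_, ?_⟩, ?_, ⟨?_, ?_, ?_, ?_, ?_⟩, ?_, ?_⟩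
  · -- left counit
    apply (Pi.basisFun k (Fin n × Bool)).ext
    intro s
    simp only [LinearMap.comp_apply, deltaFn_basis, hΔ', map_smul,
      TensorProduct.map_tmul, LinearMap.id_apply, LinearEquiv.coe_coe,
      TensorProduct.lid_tmul, hεδ, smul_smul]
    rw [mul_inv_cancel₀ hl, one_smul]
  · -- right counit
    apply (Pi.basisFun k (Fin n × Bool)).ext
    intro s
    simp only [LinearMap.comp_apply, deltaFn_basis, hΔ', map_smul,
      TensorProduct.map_tmul, LinearMap.id_apply, LinearEquiv.coe_coe,
      TensorProduct.rid_tmul, hεδ, smul_smul]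
    rw [mul_inv_cancel₀ hl, one_smul]
  · -- coassociativity
    apply (Pi.basisFun k (Fin n × Bool)).ext
    intro s
    simp only [LinearMap.comp_apply, deltaFn_basis, hΔ', map_smul,
      TensorProduct.map_tmul, LinearMap.id_apply, TensorProduct.tmul_smul,
      ← TensorProduct.smul_tmul', map_smul, LinearEquiv.coe_coe,
      TensorProduct.assoc_tmul]
  · -- (b) Frobenius
    apply ((Pi.basisFun k (Fin n × Bool)).tensorProduct
      (Pi.basisFun k (Fin n × Bool))).ext
    rintro ⟨s, t⟩
    rw [Module.Basis.tensorProduct_apply]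
    simp only [LinearMap.comp_apply]
    rw [deltaFn_basis, deltaFn_basis,
      LinearMap.mul'_apply, TensorProduct.map_tmul, LinearMap.id_apply, hΔ',
      TensorProduct.tmul_smul, map_smul, map_smul, LinearEquiv.coe_coe,
      TensorProduct.assoc_symm_tmul, TensorProduct.map_tmul, LinearMap.id_apply,
      LinearMap.mul'_apply, deltaFn_mul]
    by_cases h : s = t
    · subst h
      rw [if_pos rfl, hΔ']
    · rw [if_neg h, map_zero, TensorProduct.zero_tmul, smul_zero]
  · -- φ involution
    apply LinearMap.ext
    intro f
    funext u
    obtain ⟨i, v⟩ := u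
    simp [hφ]
  · -- φ ∘ u = u
    apply LinearMap.ext
    intro c
    funext u
    obtain ⟨i, v⟩ := u
    simp [hφ, Algebra.linearMap_apply, Pi.algebraMap_apply]
  · -- ε ∘ φ = ε
    apply LinearMap.ext
    intro f
    simp only [LinearMap.comp_apply]
    rw [hε, hε]
    congr 1
    refine Fintype.sum_equiv
      ((Equiv.refl (Fin n)).prodCongr ⟨not, not, Bool.not_not, Bool.not_not⟩)
      _ _ ?_
    rintro ⟨i, v⟩
    exact hφ f i v
  · -- φ multiplicative
    intro f g
    funext u
    obtain ⟨i, v⟩ := u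
    simp [hφ, Pi.mul_apply]
  · -- Δ ∘ φ = (φ ⊗ φ) ∘ Δ
    apply (Pi.basisFun k (Fin n × Bool)).ext
    rintro ⟨i, v⟩
    simp only [LinearMap.comp_apply, deltaFn_basis, hφδ, hΔ', map_smul,
      TensorProduct.map_tmul]
  · -- (d)
    apply LinearMap.ext_ring
    rw [LinearMap.comp_apply, LinearMap.comp_apply, LinearMap.comp_apply,
      Algebra.linearMap_apply, map_one, LinearMap.zero_apply]
    have h1 : Δ (1 : FunAlg k n) =
        ∑ s : Fin n × Bool, l • (deltaFn k n s ⊗ₜ[k] deltaFn k n s) := by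
      rw [← sum_deltaFn, map_sum]
      exact Finset.sum_congr rfl fun s _ => hΔ' s
    rw [h1, map_sum, map_sum]
    refine Finset.sum_eq_zero fun s _ => ?_
    obtain ⟨i, v⟩ := s
    rw [map_smul, map_smul, TensorProduct.map_tmul, hφδ,
      LinearMap.id_apply, LinearMap.mul'_apply, deltaFn_mul]
    have hne : ((i, !v) : Fin n × Bool) ≠ (i, v) := by
      simp
    rw [if_neg hne, smul_zero]
  · -- (e)
    apply (Pi.basisFun k (Fin n × Bool)).ext
    intro s
    rw [LinearMap.comp_apply, deltaFn_basis, hΔ', map_smul,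
      LinearMap.mul'_apply, deltaFn_mul_self, LinearMap.smul_apply,
      LinearMap.id_apply]
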